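/- arXiv:1602.04012 — 2 statements merged into one kernel-verified Lean document; each statement's English description precedes it below -/
import Mathlib

section
/- Let d ≥ 2, W divisible by 4d^3, q a divisor of d with q ≥ 2, a coprime to q, and b coprime to W with -b a d-th power of a unit mod W. Then ∑_{z ∈ [1,W], z^d ≡ -b mod W} S*_q(a,z) = 0, where S*_q(a,z) = ∑_{r mod q, gcd(z+Wr, Wq)=1} e_q(a((z+Wr)^d + b)/W). -/
/-!
Put `n = z + W r`. As `(z, r)` runs over `[1, W] × [0, q)`, `n` runs once over `ℤ/Wqℤ`, so the
double sum is `∑ f(n)` over `n mod Wq`, where `f(n) = e_{Wq}(a (n^d + b))` on the units `n` with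
`n^d ≡ -b mod W` and `f(n) = 0` elsewhere. For `M = W/d` we have `Wq ∣ M²`, hence
`(n + M)^d ≡ n^d + W n^{d-1} mod Wq`: the translation `n ↦ n + M` multiplies `f(n)` by
`χ(n) = e_q(a n^{d-1})`, a translation-invariant root of unity which is `≠ 1` on units.
Averaging `∑ f = ∑ χ^k f` over a period of the translation kills the sum.
-/

open Complex Real

open Finset

theorem add_pow_eq_of_sq_eq_zero {R : Type*} [CommRing R] {x t : R} (ht : t ^ 2 = 0) (d : ℕ) :
    (x + t) ^ d = x ^ d + d * x ^ (d - 1) * t := by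
  obtain ⟨c, hc⟩ := sq_dvd_add_pow_sub_sub t x d
  rw [ht, zero_mul] at hc
  linear_combination hc

theorem Equiv.Perm.sum_eq_zero_of_apply_eq_mul {ι K : Type*} [Fintype ι] [Field K] [CharZero K]
    (σ : Equiv.Perm ι) (f χ : ι → K) (hf : ∀ x, f (σ x) = χ x * f x)
    (hχ : ∀ x, χ (σ x) = χ x) (hne : ∀ x, f x ≠ 0 → χ x ≠ 1) : ∑ x, f x = 0 := by
  have hiter : ∀ k x, χ ((σ ^ k) x) = χ x ∧ f ((σ ^ k) x) = χ x ^ k * f x := by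
    intro k x
    induction k with
    | zero => simp
    | succ k ih => rw [pow_succ', Equiv.Perm.mul_apply, hχ, hf, ih.1, ih.2]; exact ⟨rfl, by ring⟩
  have htwist : ∀ k, ∑ x, χ x ^ k * f x = ∑ x, f x := fun k => by
    rw [← Equiv.sum_comp (σ ^ k) f]
    exact sum_congr rfl fun x _ => (hiter k x).2.symm
  set L := orderOf σ
  have hgeom : ∀ x, (∑ k ∈ range L, χ x ^ k) * f x = 0 := by
    intro x
    by_cases hfx : f x = 0
    · rw [hfx, mul_zero]
    have hroot : χ x ^ L = 1 := by
      have := (hiter L x).2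
      rw [pow_orderOf_eq_one, Equiv.Perm.one_apply] at this
      exact (mul_eq_right₀ hfx).mp this.symm
    rw [geom_sum_eq (hne x hfx), hroot, sub_self, zero_div, zero_mul]
  have hL : (L : K) ≠ 0 := Nat.cast_ne_zero.mpr (orderOf_pos σ).ne'
  apply (mul_right_inj' hL).mp
  calc (L : K) * ∑ x, f x = ∑ k ∈ range L, ∑ x, χ x ^ k * f x := by simp [htwist]
    _ = ∑ x, (∑ k ∈ range L, χ x ^ k) * f x := by rw [sum_comm]; simp [sum_mul]
    _ = (L : K) * 0 := by simp [hgeom]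

namespace ZMod

theorem injOn_natCast_add_mul (W q : ℕ) :
    Set.InjOn (fun p : ℕ × ℕ => ((p.1 + W * p.2 : ℕ) : ZMod (W * q))) ↑(Icc 1 W ×ˢ range q) := by
  have hbound : ∀ p ∈ Icc 1 W ×ˢ range q, 1 ≤ p.1 + W * p.2 ∧ p.1 + W * p.2 ≤ W * q := by
    simp only [mem_product, mem_Icc, mem_range]
    rintro ⟨z, r⟩ ⟨⟨hz1, hzW⟩, hr⟩
    exact ⟨by omega, by nlinarith [Nat.mul_le_mul_left W (Nat.succ_le_of_lt hr)]⟩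
  rintro ⟨z, r⟩ hzr ⟨z', r'⟩ hzr' h
  obtain ⟨h1, h2⟩ := hbound _ hzr
  obtain ⟨h1', h2'⟩ := hbound _ hzr'
  simp only [coe_product, Set.mem_prod, coe_Icc, Set.mem_Icc, coe_range, Set.mem_Iio] at hzr hzr'
  have heq : z + W * r = z' + W * r' :=
    ((natCast_eq_natCast_iff _ _ _).mp h).eq_of_abs_lt (abs_sub_lt_iff.mpr ⟨by omega, by omega⟩)
  have hr : r = r' := by
    rcases lt_trichotomy r r' with hlt | heq' | hgt
    · nlinarith [Nat.mul_le_mul_left W (Nat.succ_le_of_lt hlt)]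
    · exact heq'
    · nlinarith [Nat.mul_le_mul_left W (Nat.succ_le_of_lt hgt)]
  subst hr
  simp only [Prod.mk.injEq, and_true]
  omega

theorem sum_Icc_sum_range_natCast_add_mul {β : Type*} [AddCommMonoid β] (W q : ℕ)
    [NeZero (W * q)] (G : ZMod (W * q) → β) :
    ∑ z ∈ Icc 1 W, ∑ r ∈ range q, G (z + W * r : ℕ) = ∑ n, G n := by
  rw [← sum_product']
  have hinj := injOn_natCast_add_mul W q
  refine sum_nbij _ (fun _ _ => mem_univ _) hinj
    (surjOn_of_injOn_of_card_le _ (fun _ _ => mem_univ _) hinj ?_) (fun _ _ => rfl)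
  simp

theorem castHom_add_natCast {W q M : ℕ} (hM : q ∣ M) (n : ZMod (W * q)) :
    castHom (dvd_mul_left q W) (ZMod q) (n + M) = castHom (dvd_mul_left q W) (ZMod q) n := by
  rw [map_add, map_natCast, (natCast_eq_zero_iff M q).mpr hM, add_zero]

theorem stdAddChar_natCast_mul {W q : ℕ} [NeZero W] [NeZero q] (x : ZMod (W * q)) :
    stdAddChar ((W : ZMod (W * q)) * x) = stdAddChar (castHom (dvd_mul_left q W) (ZMod q) x) := by
  rw [← natCast_zmod_val x, map_natCast, ← Nat.cast_mul, ← Int.cast_natCast (W * x.val),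
    ← Int.cast_natCast x.val, stdAddChar_coe, stdAddChar_coe]
  congr 1
  push_cast
  field_simp [NeZero.ne W]

theorem stdAddChar_intCast_mul_ne_one {q : ℕ} [NeZero q] (hq : q ≠ 1) {a : ℤ}
    (ha : Int.gcd a q = 1) {u : ZMod q} (hu : IsUnit u) : stdAddChar ((a : ZMod q) * u) ≠ 1 := by
  have : Nontrivial (ZMod q) := nontrivial_iff.mpr hq
  have ha' : IsUnit (a : ZMod q) :=
    (coe_int_isUnit_iff_isCoprime a q).mpr (Int.isCoprime_iff_gcd_eq_one.mpr (by rwa [Int.gcd_comm]))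
  rw [Ne, ← (stdAddChar (N := q)).map_zero_eq_one, injective_stdAddChar.eq_iff]
  exact (ha'.mul hu).ne_zero

end ZMod

open ZMod

noncomputable def sStarTerm (W q d : ℕ) [NeZero W] [NeZero q] (a b : ℤ) (n : ZMod (W * q)) : ℂ :=
  if castHom (dvd_mul_right W q) (ZMod W) (n ^ d + b) = 0 ∧ IsUnit n then
    stdAddChar (a * (n ^ d + b) : ZMod (W * q))
  else 0

section sStarTerm

variable {W q d : ℕ} [NeZero W] [NeZero q] {a b : ℤ}

theorem isUnit_of_sStarTerm_ne_zero {n : ZMod (W * q)} (hn : sStarTerm W q d a b n ≠ 0) :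
    IsUnit n := by
  unfold sStarTerm at hn
  split_ifs at hn with h
  · exact h.2
  · exact absurd rfl hn

theorem sStarTerm_add_natCast {M : ℕ} (hWM : d * M = W) (hM : d * q ∣ M) (n : ZMod (W * q)) :
    sStarTerm W q d a b (n + M) =
      stdAddChar ((a : ZMod q) * castHom (dvd_mul_left q W) (ZMod q) n ^ (d - 1)) *
        sStarTerm W q d a b n := by
  have hM2 : (M : ZMod (W * q)) ^ 2 = 0 := by
    obtain ⟨k, rfl⟩ := hM
    rw [← Nat.cast_pow, natCast_eq_zero_iff, ← hWM]
    exact ⟨k, by ring⟩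
  have hpow : (n + M) ^ d = n ^ d + W * n ^ (d - 1) := by
    have hWcast : ((d * M : ℕ) : ZMod (W * q)) = W := congrArg Nat.cast hWM
    rw [add_pow_eq_of_sq_eq_zero hM2, ← hWcast]
    push_cast
    ring
  have hnil : IsNilpotent (M : ZMod (W * q)) := ⟨2, hM2⟩
  have hunit : IsUnit (n + M) ↔ IsUnit n :=
    ⟨fun h => by simpa using hnil.neg.isUnit_add_left_of_commute h (Commute.all _ _),
      fun h => hnil.isUnit_add_left_of_commute h (Commute.all _ _)⟩
  have hcond : castHom (dvd_mul_right W q) (ZMod W) ((n + M) ^ d + b) =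
      castHom (dvd_mul_right W q) (ZMod W) (n ^ d + b) := by
    rw [hpow, add_right_comm, map_add _ (n ^ d + b), map_mul, map_natCast, natCast_self, zero_mul,
      add_zero]
  unfold sStarTerm
  simp only [hcond, hunit]
  split_ifs
  · rw [hpow, ← map_intCast (castHom (dvd_mul_left q W) (ZMod q)) a, ← map_pow, ← map_mul,
      ← stdAddChar_natCast_mul, ← AddChar.map_add_eq_mul]
    congr 1
    ring
  · rw [mul_zero]

theorem ite_ite_eq_sStarTerm (z r : ℕ) :
    (if ((z : ℤ) ^ d + b) % (W : ℤ) = 0 then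
      if Int.gcd ((z : ℤ) + W * r) ((W : ℤ) * q) = 1 then
        Complex.exp (2 * π * Complex.I * (a * (((z : ℤ) + W * r) ^ d + b)) / ((W : ℤ) * q))
      else 0
    else 0) = sStarTerm W q d a b (z + W * r : ℕ) := by
  have hcond : ((z : ℤ) ^ d + b) % (W : ℤ) = 0 ↔
      castHom (dvd_mul_right W q) (ZMod W) ((z + W * r : ℕ) ^ d + b) = 0 := by
    rw [← Int.dvd_iff_emod_eq_zero, ← intCast_zmod_eq_zero_iff_dvd, map_add, map_pow, map_natCast,
      map_intCast]
    push_cast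
    rw [natCast_self, zero_mul, add_zero]
  have hunit : Int.gcd ((z : ℤ) + W * r) ((W : ℤ) * q) = 1 ↔
      IsUnit ((z + W * r : ℕ) : ZMod (W * q)) := by
    rw [isUnit_iff_coprime, Nat.coprime_iff_gcd_eq_one, ← Int.gcd_natCast_natCast]
    push_cast
    rfl
  have hexp : Complex.exp (2 * π * Complex.I * (a * (((z : ℤ) + W * r) ^ d + b)) / ((W : ℤ) * q)) =
      stdAddChar (a * ((z + W * r : ℕ) ^ d + b) : ZMod (W * q)) := by
    have hcast : (a * ((z + W * r : ℕ) ^ d + b) : ZMod (W * q)) =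
        ((a * (((z : ℤ) + W * r) ^ d + b) : ℤ) : ZMod (W * q)) := by push_cast; ring
    rw [hcast, stdAddChar_coe]
    push_cast
    ring_nf
  rw [← ite_and, sStarTerm]
  simp only [hcond, hunit, hexp]

end sStarTerm

theorem sum_Sstar_vanishes_general (d W q : ℕ) (hW : 4 * d ^ 3 ∣ W)
    (hq : q ∣ d) (hq2 : 2 ≤ q) (a : ℤ) (ha : Int.gcd a (q : ℤ) = 1)
    (b : ℤ) :
    (∑ z ∈ (Finset.Icc 1 W).filter
        (fun z : ℕ => ((z : ℤ) ^ d + b) % (W : ℤ) = 0),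
      ∑ r ∈ Finset.range q,
        if Int.gcd ((z : ℤ) + W * r) ((W : ℤ) * q) = 1 then
          Complex.exp (2 * π * Complex.I *
            (a * (((z : ℤ) + W * r) ^ d + b)) / ((W : ℤ) * q))
        else 0) = 0 := by
  rcases Nat.eq_zero_or_pos W with rfl | hW0
  · simp
  have : NeZero W := ⟨hW0.ne'⟩
  have : NeZero q := ⟨by omega⟩
  obtain ⟨k, hk⟩ := hW
  have hWM : d * (4 * d ^ 2 * k) = W := by rw [hk]; ring
  have hdqM : d * q ∣ 4 * d ^ 2 * k := (mul_dvd_mul_left d hq).trans ⟨4 * k, by ring⟩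
  rw [sum_filter]
  simp only [ite_sum_zero, ite_ite_eq_sStarTerm]
  rw [sum_Icc_sum_range_natCast_add_mul W q (sStarTerm W q d a b)]
  exact (Equiv.addRight _).sum_eq_zero_of_apply_eq_mul _ _ (sStarTerm_add_natCast hWM hdqM)
    (fun n => by rw [Equiv.coe_addRight, castHom_add_natCast (dvd_of_mul_left_dvd hdqM)])
    (fun n hn => stdAddChar_intCast_mul_ne_one (by omega) ha
      (((isUnit_of_sStarTerm_ne_zero hn).map _).pow _))

theorem sum_Sstar_vanishes (d W q : ℕ) (hd : 2 ≤ d) (hW : 4 * d ^ 3 ∣ W)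
    (hq : q ∣ d) (hq2 : 2 ≤ q) (a : ℤ) (ha : Int.gcd a (q : ℤ) = 1)
    (b : ℤ) (hb : Int.gcd b (W : ℤ) = 1)
    (hbpow : ∃ z : (ZMod W)ˣ, -(b : ZMod W) = (z : ZMod W) ^ d) :
    (∑ z ∈ (Finset.Icc 1 W).filter
        (fun z : ℕ => ((z : ℤ) ^ d + b) % (W : ℤ) = 0),
      ∑ r ∈ Finset.range q,
        if Int.gcd ((z : ℤ) + W * r) ((W : ℤ) * q) = 1 then
          Complex.exp (2 * π * Complex.I *
            (a * (((z : ℤ) + W * r) ^ d + b)) / ((W : ℤ) * q))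
        else 0) = 0 :=
  sum_Sstar_vanishes_general d W q hW hq hq2 a ha b
end

section
/- Let μ, ψ be as follows: μ : ℤ → [0,∞) finitely supported, ψ : ℤ → ℂ with |ψ| ≤ μ, and let M = ∑_n μ(n). Let θ_1, ..., θ_R ∈ 𝕋 be points with |ψ̂(θ_r)| > δ M for each r, where δ > 0. Then δ² M R² ≤ ∑_{1 ≤ r, r' ≤ R} |μ̂(θ_r - θ_{r'})|. -/
/-!
Choose phases `c r` with `‖c r‖ ≤ 1` and `c r * ψ̂(θ r) = ‖ψ̂(θ r)‖`. Then
`∑ r, ‖ψ̂(θ r)‖ = ∑ n, ψ n * T n` with `T n = ∑ r, c r * e(θ r * n)`, so `|ψ| ≤ μ` and the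
Cauchy–Schwarz inequality with weight `μ` give `(∑ r, ‖ψ̂(θ r)‖)² ≤ M * ∑ n, μ n * ‖T n‖²`.
Expanding `‖T n‖² = T n * conj (T n)` turns the last sum into
`∑ r, ∑ r', c r * conj (c r') * μ̂(θ r - θ r')`, while the largeness hypothesis bounds the
left-hand side below by `(δ * M * R)²`.
-/

open Complex Real

open Finset

section LargeSpectrum

open scoped ComplexConjugate

variable {𝕜 ι κ : Type*} [RCLike 𝕜]

theorem RCLike.exists_norm_le_one_mul_eq_norm (z : 𝕜) : ∃ c : 𝕜, ‖c‖ ≤ 1 ∧ c * z = ‖z‖ := by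
  rcases eq_or_ne z 0 with rfl | hz
  · exact ⟨0, by simp⟩
  have hz' : (‖z‖ : 𝕜) ≠ 0 := RCLike.ofReal_ne_zero.2 (norm_ne_zero_iff.2 hz)
  refine ⟨conj z / ‖z‖, by simp [norm_div, hz], ?_⟩
  rw [div_mul_eq_mul_div, RCLike.conj_mul, sq, mul_div_cancel_right₀ _ hz']

theorem exists_sum_norm_le_sum_mul_norm_sum [Fintype κ] (S : Finset ι) (μ : ι → ℝ) (ψ : ι → 𝕜)
    (hψ : ∀ n ∈ S, ‖ψ n‖ ≤ μ n) (e : κ → ι → 𝕜) :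
    ∃ c : κ → 𝕜, (∀ r, ‖c r‖ ≤ 1) ∧
      ∑ r, ‖∑ n ∈ S, ψ n * e r n‖ ≤ ∑ n ∈ S, μ n * ‖∑ r, c r * e r n‖ := by
  choose c hc hcF using fun r => RCLike.exists_norm_le_one_mul_eq_norm (∑ n ∈ S, ψ n * e r n)
  refine ⟨c, hc, ?_⟩
  have hdual : ((∑ r, ‖∑ n ∈ S, ψ n * e r n‖ : ℝ) : 𝕜) = ∑ n ∈ S, ψ n * ∑ r, c r * e r n := by
    simp only [RCLike.ofReal_sum, ← hcF, mul_sum]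
    rw [sum_comm]
    exact sum_congr rfl fun n _ => sum_congr rfl fun r _ => by ring
  calc ∑ r, ‖∑ n ∈ S, ψ n * e r n‖
      ≤ ‖((∑ r, ‖∑ n ∈ S, ψ n * e r n‖ : ℝ) : 𝕜)‖ := by
        rw [RCLike.norm_ofReal]; exact le_abs_self _
    _ ≤ ∑ n ∈ S, ‖ψ n‖ * ‖∑ r, c r * e r n‖ := by
        rw [hdual]; exact norm_sum_le_of_le _ fun n _ => (norm_mul _ _).le
    _ ≤ ∑ n ∈ S, μ n * ‖∑ r, c r * e r n‖ :=
      sum_le_sum fun n hn => mul_le_mul_of_nonneg_right (hψ n hn) (norm_nonneg _)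

theorem sum_mul_norm_sum_sq_le [Fintype κ] (S : Finset ι) (μ : ι → ℝ) (e : κ → ι → 𝕜)
    (c : κ → 𝕜) (hc : ∀ r, ‖c r‖ ≤ 1) :
    ∑ n ∈ S, μ n * ‖∑ r, c r * e r n‖ ^ 2 ≤
      ∑ r, ∑ r', ‖∑ n ∈ S, (μ n : 𝕜) * (e r n * conj (e r' n))‖ := by
  have hexpand : ((∑ n ∈ S, μ n * ‖∑ r, c r * e r n‖ ^ 2 : ℝ) : 𝕜) =
      ∑ r, ∑ r', c r * conj (c r') * ∑ n ∈ S, (μ n : 𝕜) * (e r n * conj (e r' n)) := by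
    have hsq : ∀ n, ((‖∑ r, c r * e r n‖ ^ 2 : ℝ) : 𝕜) =
        ∑ r, ∑ r', c r * e r n * conj (c r' * e r' n) := fun n => by
      rw [RCLike.ofReal_pow, ← RCLike.mul_conj, map_sum, sum_mul_sum]
    simp only [RCLike.ofReal_sum, RCLike.ofReal_mul, hsq, mul_sum]
    rw [sum_comm]
    refine sum_congr rfl fun r _ => ?_
    rw [sum_comm]
    refine sum_congr rfl fun r' _ => sum_congr rfl fun n _ => ?_
    rw [map_mul]
    ring
  calc ∑ n ∈ S, μ n * ‖∑ r, c r * e r n‖ ^ 2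
      ≤ ‖((∑ n ∈ S, μ n * ‖∑ r, c r * e r n‖ ^ 2 : ℝ) : 𝕜)‖ := by
        rw [RCLike.norm_ofReal]; exact le_abs_self _
    _ ≤ ∑ r, ∑ r', ‖c r * conj (c r') * ∑ n ∈ S, (μ n : 𝕜) * (e r n * conj (e r' n))‖ := by
        rw [hexpand]
        exact (norm_sum_le _ _).trans (sum_le_sum fun r _ => norm_sum_le _ _)
    _ ≤ ∑ r, ∑ r', ‖∑ n ∈ S, (μ n : 𝕜) * (e r n * conj (e r' n))‖ := by
        refine sum_le_sum fun r _ => sum_le_sum fun r' _ => ?_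
        rw [norm_mul, norm_mul, RCLike.norm_conj]
        exact mul_le_of_le_one_left (norm_nonneg _)
          (mul_le_one₀ (hc r) (norm_nonneg _) (hc r'))

theorem sq_sum_norm_le_sum_mul_sum_sum_norm [Fintype κ] (S : Finset ι) (μ : ι → ℝ)
    (ψ : ι → 𝕜) (hψ : ∀ n ∈ S, ‖ψ n‖ ≤ μ n) (e : κ → ι → 𝕜) :
    (∑ r, ‖∑ n ∈ S, ψ n * e r n‖) ^ 2 ≤
      (∑ n ∈ S, μ n) * ∑ r, ∑ r', ‖∑ n ∈ S, (μ n : 𝕜) * (e r n * conj (e r' n))‖ := by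
  have hμ : ∀ n ∈ S, 0 ≤ μ n := fun n hn => (norm_nonneg _).trans (hψ n hn)
  obtain ⟨c, hc, hdual⟩ := exists_sum_norm_le_sum_mul_norm_sum S μ ψ hψ e
  calc (∑ r, ‖∑ n ∈ S, ψ n * e r n‖) ^ 2
      ≤ (∑ n ∈ S, μ n * ‖∑ r, c r * e r n‖) ^ 2 := by gcongr
    _ ≤ (∑ n ∈ S, μ n) * ∑ n ∈ S, μ n * ‖∑ r, c r * e r n‖ ^ 2 :=
        sum_sq_le_sum_mul_sum_of_sq_le_mul S hμ
          (fun n hn => mul_nonneg (hμ n hn) (sq_nonneg _)) fun n _ => (by ring : _ = _).le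
    _ ≤ _ := mul_le_mul_of_nonneg_left (sum_mul_norm_sum_sq_le S μ e c hc) (sum_nonneg hμ)

end LargeSpectrum

theorem Complex.exp_two_pi_I_sub_mul_intCast (a b : ℝ) (n : ℤ) :
    exp (2 * π * I * (a - b) * n) =
      exp (2 * π * I * a * n) * (starRingEnd ℂ) (exp (2 * π * I * b * n)) := by
  rw [← exp_conj, ← exp_add]
  congr 1
  simp only [map_mul, conj_I, map_ofNat, conj_ofReal, map_intCast]
  ring

theorem bourgain_large_spectrum_inequality_general (S : Finset ℤ) (μ : ℤ → ℝ) (ψ : ℤ → ℂ)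
    (hψ : ∀ n, ‖ψ n‖ ≤ μ n)
    (M : ℝ) (hM : M = ∑ n ∈ S, μ n)
    (R : ℕ) (θ : Fin R → ℝ) (δ : ℝ) (hδ : 0 < δ)
    (hlarge : ∀ r : Fin R,
      δ * M < ‖∑ n ∈ S, ψ n * Complex.exp (2 * π * Complex.I * θ r * n)‖) :
    δ ^ 2 * M * (R : ℝ) ^ 2 ≤
      ∑ r : Fin R, ∑ r' : Fin R,
        ‖∑ n ∈ S, (μ n : ℂ) * Complex.exp (2 * π * Complex.I * (θ r - θ r') * n)‖ := by
  have hCS := sq_sum_norm_le_sum_mul_sum_sum_norm S μ ψ (fun n _ => hψ n)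
    fun r n => exp (2 * π * I * θ r * n)
  simp only [← exp_two_pi_I_sub_mul_intCast, ← hM] at hCS
  have hlow : δ * M * R ≤ ∑ r, ‖∑ n ∈ S, ψ n * exp (2 * π * I * θ r * n)‖ := by
    calc δ * M * R = ∑ _r : Fin R, δ * M := by simp [mul_comm]
      _ ≤ _ := sum_le_sum fun r _ => (hlarge r).le
  have hM0 : 0 ≤ M := hM ▸ sum_nonneg fun n _ => (norm_nonneg _).trans (hψ n)
  rcases hM0.eq_or_lt with rfl | hMpos
  · simp only [mul_zero, zero_mul]
    exact sum_nonneg fun _ _ => sum_nonneg fun _ _ => norm_nonneg _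
  refine le_of_mul_le_mul_left ?_ hMpos
  calc M * (δ ^ 2 * M * R ^ 2) = (δ * M * R) ^ 2 := by ring
    _ ≤ (∑ r, ‖∑ n ∈ S, ψ n * exp (2 * π * I * θ r * n)‖) ^ 2 :=
        pow_le_pow_left₀ (by positivity) hlow 2
    _ ≤ _ := hCS

theorem bourgain_large_spectrum_inequality (S : Finset ℤ) (μ : ℤ → ℝ) (ψ : ℤ → ℂ)
    (hμ0 : ∀ n, 0 ≤ μ n) (hsupp : ∀ n ∉ S, μ n = 0) (hψ : ∀ n, ‖ψ n‖ ≤ μ n)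
    (M : ℝ) (hM : M = ∑ n ∈ S, μ n)
    (R : ℕ) (θ : Fin R → ℝ) (δ : ℝ) (hδ : 0 < δ)
    (hlarge : ∀ r : Fin R,
      δ * M < ‖∑ n ∈ S, ψ n * Complex.exp (2 * π * Complex.I * θ r * n)‖) :
    δ ^ 2 * M * (R : ℝ) ^ 2 ≤
      ∑ r : Fin R, ∑ r' : Fin R,
        ‖∑ n ∈ S, (μ n : ℂ) * Complex.exp (2 * π * Complex.I * (θ r - θ r') * n)‖ :=
  bourgain_large_spectrum_inequality_general S μ ψ hψ M hM R θ δ hδ hlarge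
end
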